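/- Let 𝒜 be a unital C*-algebra and let a, b ∈ 𝒜 be positive elements. Then 2 ‖a^(1/2) b^(1/2)‖ ≤ ‖a + b‖. -/
import Mathlib


/-- **Arithmetic–geometric mean inequality (operator-norm case).** For positive
elements `a, b` of a unital C*-algebra, `2 ‖a^(1/2) b^(1/2)‖ ≤ ‖a + b‖`, where
`a^(1/2)` is the unique positive square root. -/
theorem am_gm_inequality_cstar {A : Type*} [CStarAlgebra A]
    [PartialOrder A] [StarOrderedRing A]
    (a b : A) (ha : 0 ≤ a) (hb : 0 ≤ b) :
    2 * ‖CFC.sqrt a * CFC.sqrt b‖ ≤ ‖a + b‖ := by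
  set x := CFC.sqrt a with hx
  set y := CFC.sqrt b with hy
  set c := a + b with hc
  have hxnn : 0 ≤ x := CFC.sqrt_nonneg (a := a)
  have hynn : 0 ≤ y := CFC.sqrt_nonneg (a := b)
  have hxsa : IsSelfAdjoint x := IsSelfAdjoint.of_nonneg hxnn
  have hysa : IsSelfAdjoint y := IsSelfAdjoint.of_nonneg hynn
  have hxx : x * x = a := CFC.sqrt_mul_sqrt_self a ha
  have hyy : y * y = b := CFC.sqrt_mul_sqrt_self b hb
  have hcnn : 0 ≤ c := add_nonneg ha hb
  have hcnorm : (0:ℝ) ≤ ‖c‖ := norm_nonneg c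
  set k : ℝ := (‖c‖ / 2) ^ 2 with hk
  -- key: ‖x*y‖^2 = ‖y * a * y‖
  have hsq : ‖x * y‖ ^ 2 = ‖y * a * y‖ := by
    have h := CStarRing.norm_star_mul_self (x := x * y)
    rw [star_mul, hxsa.star_eq, hysa.star_eq] at h
    rw [sq, ← h]
    congr 1
    rw [mul_assoc y x (x * y), ← mul_assoc x x y, hxx, mul_assoc]
  -- y * a * y = y * c * y - b * b
  have split : y * a * y = y * c * y - b * b := by
    have : a = c - b := by rw [hc]; abel
    have hyby : y * b * y = b * b := by rw [← hyy]; noncomm_ring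
    rw [this, mul_sub, sub_mul, hyby]
  -- y * c * y ≤ ‖c‖ • b
  have h2 : c ≤ algebraMap ℝ A ‖c‖ := IsSelfAdjoint.le_algebraMap_norm_self hcnn.isSelfAdjoint
  have hconj : y * c * y ≤ ‖c‖ • b := by
    have h := star_left_conjugate_le_conjugate h2 y
    rw [hysa.star_eq] at h
    refine h.trans_eq ?_
    rw [Algebra.algebraMap_eq_smul_one, mul_smul_comm, mul_one, smul_mul_assoc, hyy]
  -- ‖c‖ • b - b * b ≤ k • 1
  have hbound : ‖c‖ • b - b * b ≤ algebraMap ℝ A k := by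
    have hsa : IsSelfAdjoint (b - algebraMap ℝ A (‖c‖ / 2)) :=
      (IsSelfAdjoint.of_nonneg hb).sub (IsSelfAdjoint.algebraMap A (IsSelfAdjoint.all _))
    have hsq2 : (0:A) ≤ (b - algebraMap ℝ A (‖c‖ / 2)) * (b - algebraMap ℝ A (‖c‖ / 2)) := by
      simpa [hsa.star_eq] using star_mul_self_nonneg (b - algebraMap ℝ A (‖c‖ / 2))
    have expand : (b - algebraMap ℝ A (‖c‖ / 2)) * (b - algebraMap ℝ A (‖c‖ / 2))
        = b * b - ‖c‖ • b + algebraMap ℝ A k := by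
      rw [hk, Algebra.algebraMap_eq_smul_one, Algebra.algebraMap_eq_smul_one]
      simp only [sub_mul, mul_sub, smul_mul_assoc, mul_smul_comm, mul_one, one_mul,
        smul_smul, smul_sub]
      module
    rw [expand] at hsq2
    rw [← sub_nonneg]
    convert hsq2 using 1
    abel
  have hyay_le : y * a * y ≤ algebraMap ℝ A k := by
    rw [split]
    calc y * c * y - b * b ≤ ‖c‖ • b - b * b := by
          exact sub_le_sub_right hconj _
      _ ≤ algebraMap ℝ A k := hbound
  have hyay_nn : 0 ≤ y * a * y := by
    have h := star_left_conjugate_nonneg ha y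
    rwa [hysa.star_eq] at h
  have hknn : (0:ℝ) ≤ k := sq_nonneg _
  have hnorm : ‖y * a * y‖ ≤ k :=
    (CStarAlgebra.norm_le_iff_le_algebraMap _ hknn hyay_nn).2 hyay_le
  have : ‖x * y‖ ^ 2 ≤ (‖c‖ / 2) ^ 2 := by rw [hsq]; exact hnorm
  nlinarith [this, norm_nonneg (x * y), hcnorm]
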